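/- arXiv:2406.06280 — 6 statements merged into one kernel-verified Lean document; each statement's English description precedes it below -/
import Mathlib

section
/- Let P, N₁, N₂ > 0 with N₁ ≤ N₂. For α ∈ [0,1], setting R₁(α) = (1/2)log₂(1 + αP/N₁) and R₂(α) = (1/2)log₂(1 + (1-α)P/(αP + N₂)), we have R₁(α) + R₂(α) ≤ (1/2)log₂(1 + P/N₁), with equality when N₁ = N₂. -/
theorem stmt_7 (P N₁ N₂ : ℝ) (hP : 0 < P) (hN₁ : 0 < N₁) (hN₂ : 0 < N₂)
    (hN : N₁ ≤ N₂) (α : ℝ) (hα : α ∈ Set.Icc (0:ℝ) 1) :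
    ((1:ℝ)/2) * Real.logb 2 (1 + α * P / N₁) +
      ((1:ℝ)/2) * Real.logb 2 (1 + (1 - α) * P / (α * P + N₂)) ≤
      ((1:ℝ)/2) * Real.logb 2 (1 + P / N₁) ∧
    (N₁ = N₂ →
      ((1:ℝ)/2) * Real.logb 2 (1 + α * P / N₁) +
        ((1:ℝ)/2) * Real.logb 2 (1 + (1 - α) * P / (α * P + N₂)) =
        ((1:ℝ)/2) * Real.logb 2 (1 + P / N₁)) := by
  obtain ⟨hα0, hα1⟩ := hα
  have hD : 0 < α * P + N₂ := by positivity
  have hx : (0:ℝ) < 1 + α * P / N₁ := by positivity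
  have hy : (0:ℝ) < 1 + (1 - α) * P / (α * P + N₂) := by
    have : 0 ≤ (1 - α) * P / (α * P + N₂) := by
      apply div_nonneg _ hD.le
      exact mul_nonneg (by linarith) hP.le
    linarith
  have hsum : ∀ x y : ℝ, 0 < x → 0 < y →
      ((1:ℝ)/2) * Real.logb 2 x + ((1:ℝ)/2) * Real.logb 2 y
        = ((1:ℝ)/2) * Real.logb 2 (x * y) := by
    intro x y hx hy
    rw [Real.logb_mul hx.ne' hy.ne', mul_add]
  have hprod : (1 + α * P / N₁) * (1 + (1 - α) * P / (α * P + N₂))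
      = (N₁ + α * P) * (N₂ + P) / (N₁ * (α * P + N₂)) := by
    field_simp
    ring_nf
  have key : (N₁ + α * P) * (N₂ + P) / (N₁ * (α * P + N₂)) ≤ 1 + P / N₁ := by
    rw [div_le_iff₀ (by positivity)]
    have h : 0 ≤ (1 - α) * P * (N₂ - N₁) :=
      mul_nonneg (mul_nonneg (by linarith) hP.le) (by linarith)
    have : (1 + P / N₁) * (N₁ * (α * P + N₂))
        = (1 + P / N₁) * N₁ * (α * P + N₂) := by ring
    rw [this]
    have hN1 : (1 + P / N₁) * N₁ = N₁ + P := by field_simp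
    rw [hN1]
    nlinarith
  constructor
  · rw [hsum _ _ hx hy, hprod]
    apply mul_le_mul_of_nonneg_left _ (by norm_num : (0:ℝ) ≤ 1/2)
    exact Real.logb_le_logb_of_le (by norm_num) (by positivity) key
  · intro hEq
    subst hEq
    rw [hsum _ _ hx hy, hprod]
    congr 1
    congr 1
    field_simp
    ring
end

section
/- Define recursively g(k, n, 0) = h(k, n) and g(k, n, j) = p·g(k+1, n+1, j-1) + (1-p)·g(k, n+1, j-1) where p = (k+1)/(n+2), for a function h: ℕ × ℕ → ℝ satisfying h(k,n) = max over α ∈ A of [R₂(α) + R₁(α)·(n-k+1)/(n+2)] for fixed functions R₁, R₂: A → ℝ on a nonempty finite set A. Then for all 0 ≤ k ≤ n and j ≥ 0, g(k, n, j+1) ≥ g(k, n, j). -/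
theorem stmt_8 {A : Type*} [Fintype A] [Nonempty A] (R₁ R₂ : A → ℝ)
    (h : ℕ → ℕ → ℝ)
    (hh : ∀ k n : ℕ, h k n =
      Finset.univ.sup' Finset.univ_nonempty
        (fun α => R₂ α + R₁ α * (((n:ℝ) - k + 1) / ((n:ℝ) + 2))))
    (g : ℕ → ℕ → ℕ → ℝ)
    (hg0 : ∀ k n, g k n 0 = h k n)
    (hgs : ∀ k n j, g k n (j+1) =
      ((k:ℝ)+1)/((n:ℝ)+2) * g (k+1) (n+1) j +
      (1 - ((k:ℝ)+1)/((n:ℝ)+2)) * g k (n+1) j)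
    (k n j : ℕ) (hkn : k ≤ n) :
    g k n (j+1) ≥ g k n j := by
  induction j generalizing k n with
  | zero =>
    have hkn' : (k:ℝ) ≤ n := Nat.cast_le.mpr hkn
    have hn2 : (0:ℝ) < (n:ℝ) + 2 := by positivity
    have hp0 : 0 ≤ ((k:ℝ)+1)/((n:ℝ)+2) := by positivity
    have hp1 : ((k:ℝ)+1)/((n:ℝ)+2) ≤ 1 := by
      rw [div_le_one hn2]; linarith
    have e1 := hh (k+1) (n+1); push_cast at e1
    have e2 := hh k (n+1); push_cast at e2
    rw [hgs, hg0, hg0, hg0, hh k n, e1, e2]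
    rw [ge_iff_le]
    apply Finset.sup'_le
    intro α _
    have h1 := Finset.le_sup' (f := fun α => R₂ α + R₁ α *
        (((n:ℝ) + 1 - ((k:ℝ) + 1) + 1) / ((n:ℝ) + 1 + 2)))
        (Finset.mem_univ α)
    have h2 := Finset.le_sup' (f := fun α => R₂ α + R₁ α *
        (((n:ℝ) + 1 - (k:ℝ) + 1) / ((n:ℝ) + 1 + 2)))
        (Finset.mem_univ α)
    have key : R₂ α + R₁ α * (((n:ℝ) - k + 1) / ((n:ℝ) + 2)) =
        ((k:ℝ)+1)/((n:ℝ)+2) * (R₂ α + R₁ α *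
          (((n:ℝ) + 1 - ((k:ℝ) + 1) + 1) / ((n:ℝ) + 1 + 2))) +
        (1 - ((k:ℝ)+1)/((n:ℝ)+2)) * (R₂ α + R₁ α *
          (((n:ℝ) + 1 - (k:ℝ) + 1) / ((n:ℝ) + 1 + 2))) := by
      field_simp
      ring
    rw [key]
    exact add_le_add (mul_le_mul_of_nonneg_left h1 hp0)
      (mul_le_mul_of_nonneg_left h2 (by linarith))
  | succ j ih =>
    have hn2 : (0:ℝ) < (n:ℝ) + 2 := by positivity
    have hkn' : (k:ℝ) ≤ n := Nat.cast_le.mpr hkn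
    have hp0 : 0 ≤ ((k:ℝ)+1)/((n:ℝ)+2) := by positivity
    have hp1 : ((k:ℝ)+1)/((n:ℝ)+2) ≤ 1 := by
      rw [div_le_one hn2]; linarith
    have h1 := ih (k+1) (n+1) (by omega)
    have h2 := ih k (n+1) (by omega)
    rw [hgs k n (j+1), hgs k n j, ge_iff_le]
    exact add_le_add (mul_le_mul_of_nonneg_left h1 hp0)
      (mul_le_mul_of_nonneg_left h2 (by linarith))
end

section
/- Consider the finite-horizon MDP with states (k, n, i) for 0 ≤ k ≤ n ≤ i ≤ T, actions a ∈ {0,1}, reward r(k,n,0) = R(k,n) ≥ 0 and r(k,n,1) = 0, and transitions: action 0 goes to (k,n,i+1) with probability 1; action 1 goes to (k+1,n+1,i+1) with probability (k+1)/(n+2) and to (k,n+1,i+1) with probability (n-k+1)/(n+2). Suppose R satisfies the sensing-improvement property (k+1)/(n+2)·R(k+1,n+1) + (n-k+1)/(n+2)·R(k,n+1) ≥ R(k,n) for all 0 ≤ k ≤ n. Then for every state, if the optimal value satisfies V(k,n,i) = R(k,n) + V(k,n,i+1) (i.e., action 0 is strictly optimal at (k,n,i)), then V(k,n,j) = (T-j)·R(k,n)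 for all j ≥ i, i.e., action 0 is optimal at all subsequent times from state (k,n). -/
theorem stmt_12 (T : ℕ) (R : ℕ → ℕ → ℝ) (hR : ∀ k n, 0 ≤ R k n)
    (himp : ∀ k n : ℕ, k ≤ n →
      ((k:ℝ)+1)/((n:ℝ)+2) * R (k+1) (n+1) +
        ((n:ℝ)-(k:ℝ)+1)/((n:ℝ)+2) * R k (n+1) ≥ R k n)
    (V : ℕ → ℕ → ℕ → ℝ)
    (hb : ∀ k n i : ℕ, i < T → V k n i =
      max (R k n + V k n (i+1))
        (((k:ℝ)+1)/((n:ℝ)+2) * V (k+1) (n+1) (i+1) +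
         ((n:ℝ)-(k:ℝ)+1)/((n:ℝ)+2) * V k (n+1) (i+1)))
    (ht : ∀ k n, V k n T = 0)
    (k n i : ℕ) (hkn : k ≤ n) (hi : i < T)
    (hopt : V k n i = R k n + V k n (i+1)) :
    ∀ j, i ≤ j → j ≤ T → V k n j = ((T:ℝ) - (j:ℝ)) * R k n := by
  -- action 0 lower bound
  have stepLB : ∀ k n j, j < T → R k n + V k n (j+1) ≤ V k n j := by
    intro k n j hj
    rw [hb k n j hj]; exact le_max_left _ _
  -- action 1 lower bound
  have contLB : ∀ k n j : ℕ, j < T →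
      ((k:ℝ)+1)/((n:ℝ)+2) * V (k+1) (n+1) (j+1) +
        ((n:ℝ)-(k:ℝ)+1)/((n:ℝ)+2) * V k (n+1) (j+1) ≤ V k n j := by
    intro k n j hj
    rw [hb k n j hj]; exact le_max_right _ _
  -- concavity of the value function in time
  have conc : ∀ d k n j, k ≤ n → j + 2 + d = T →
      V k n (j+1) - V k n (j+2) ≤ V k n j - V k n (j+1) := by
    intro d
    induction d with
    | zero =>
      intro k n j hkn hj
      have hT : j + 2 = T := by omega
      have h2 : V k n (j+2) = 0 := by rw [hT, ht]
      have h1 : V k n (j+1) = R k n := by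
        have h := hb k n (j+1) (by omega)
        rw [show (j+1)+1 = j+2 from rfl, hT, ht, ht, ht] at h
        simp only [mul_zero, add_zero] at h
        rw [h]; exact max_eq_left (hR k n)
      have h3 := stepLB k n j (by omega)
      linarith
    | succ d ih =>
      intro k n j hkn hj
      have hc1 : (0:ℝ) ≤ ((k:ℝ)+1)/((n:ℝ)+2) := by positivity
      have hc2 : (0:ℝ) ≤ ((n:ℝ)-(k:ℝ)+1)/((n:ℝ)+2) := by
        apply div_nonneg
        · have : (k:ℝ) ≤ (n:ℝ) := by exact_mod_cast hkn
          linarith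
        · positivity
      have hb1 := hb k n (j+1) (by omega)
      rw [show (j+1)+1 = j+2 from rfl] at hb1
      rcases max_cases (R k n + V k n (j+2))
          (((k:ℝ)+1)/((n:ℝ)+2) * V (k+1) (n+1) (j+2) +
           ((n:ℝ)-(k:ℝ)+1)/((n:ℝ)+2) * V k (n+1) (j+2)) with ⟨heq, _⟩ | ⟨heq, _⟩
      · -- action 0 attains the max at time j+1
        have h3 := stepLB k n j (by omega)
        rw [heq] at hb1
        linarith
      · -- action 1 attains the max at time j+1
        rw [heq] at hb1
        have ih1 := ih (k+1) (n+1) (j+1) (by omega) (by omega)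
        have ih2 := ih k (n+1) (j+1) (by omega) (by omega)
        rw [show (j+1)+1 = j+2 from rfl, show (j+1)+2 = j+3 from rfl] at ih1 ih2
        have m1 := mul_le_mul_of_nonneg_left ih1 hc1
        have m2 := mul_le_mul_of_nonneg_left ih2 hc2
        rw [mul_sub, mul_sub] at m1 m2
        have hVj := contLB k n j (by omega)
        have hVj2 := contLB k n (j+2) (by omega)
        rw [show (j+2)+1 = j+3 from rfl] at hVj2
        linarith
  -- the increment stays equal to R after time i
  have hdelta : ∀ e, i + e + 1 ≤ T → V k n (i+e) = R k n + V k n (i+e+1) := by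
    intro e
    induction e with
    | zero => intro _; exact hopt
    | succ e ih =>
      intro he
      have prev := ih (by omega)
      have hconc := conc (T - (i+e+2)) k n (i+e) hkn (by omega)
      have hlb := stepLB k n (i+e+1) (by omega)
      show V k n (i+e+1) = R k n + V k n (i+e+1+1)
      have h2 : V k n ((i+e)+2) = V k n (i+e+1+1) := rfl
      rw [h2] at hconc
      linarith
  -- sum up the increments
  have main : ∀ d j, i ≤ j → j + d = T → V k n j = ((T:ℝ) - (j:ℝ)) * R k n := by
    intro d
    induction d with
    | zero =>
      intro j _ hj
      have : j = T := by omega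
      subst this
      rw [ht]; ring
    | succ d ih =>
      intro j hij hj
      have h1 : V k n j = R k n + V k n (j+1) := by
        have h := hdelta (j - i) (by omega)
        rwa [show i + (j-i) = j by omega] at h
      have h2 := ih (j+1) (by omega) (by omega)
      rw [h1, h2]
      push_cast
      ring
  intro j hij hjT
  exact main (T - j) j hij (by omega)
end

section
/- In the MDP of the sensing problem, if Q(k,n,i,a=0) ≥ Q(k,n,i,a=1) where Q(k,n,i,0) = R(k,n) + V(k,n,i+1) and Q(k,n,i,1) = p·V(k+1,n+1,i+1) + (1-p)·V(k,n+1,i+1) with p = (k+1)/(n+2), and the sensing-improvement inequality p·R(k+1,n+1) + (1-p)·R(k,n+1) ≥ R(k,n) holds, then Q(k,n,i+1,0) ≥ Q(k,n,i+1,1), assuming V satisfies the Bellman recursion with terminal value 0 at time T. -/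
theorem sensing_aux_D (T : ℕ) (R : ℕ → ℕ → ℝ)
    (V : ℕ → ℕ → ℕ → ℝ)
    (hb : ∀ k n i : ℕ, i < T → V k n i =
      max (R k n + V k n (i+1))
        (((k:ℝ)+1)/((n:ℝ)+2) * V (k+1) (n+1) (i+1) +
         ((n:ℝ)-(k:ℝ)+1)/((n:ℝ)+2) * V k (n+1) (i+1)))
    (ht : ∀ k n, V k n T = 0)
    (himp : ∀ k n : ℕ, k ≤ n →
      ((k:ℝ)+1)/((n:ℝ)+2) * R (k+1) (n+1) +
        ((n:ℝ)-(k:ℝ)+1)/((n:ℝ)+2) * R k (n+1) ≥ R k n) :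
    ∀ d j : ℕ, j + d + 1 = T → ∀ k n : ℕ, k ≤ n →
      V k n j - V k n (j+1) ≤
        ((k:ℝ)+1)/((n:ℝ)+2) * (V (k+1) (n+1) j - V (k+1) (n+1) (j+1)) +
        ((n:ℝ)-(k:ℝ)+1)/((n:ℝ)+2) * (V k (n+1) j - V k (n+1) (j+1)) := by
  intro d
  induction d with
  | zero =>
    intro j hj k n hkn
    have hjT : j + 1 = T := by omega
    have hjlt : j < T := by omega
    have hp : (0:ℝ) ≤ ((k:ℝ)+1)/((n:ℝ)+2) := by positivity
    have hq : (0:ℝ) ≤ ((n:ℝ)-(k:ℝ)+1)/((n:ℝ)+2) := by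
      apply div_nonneg _ (by positivity)
      have : (k:ℝ) ≤ (n:ℝ) := by exact_mod_cast hkn
      linarith
    have z : ∀ a b : ℕ, V a b (j+1) = 0 := by
      intro a b; rw [hjT]; exact ht a b
    rw [hb k n j hjlt, hb (k+1) (n+1) j hjlt, hb k (n+1) j hjlt]
    simp only [z, add_zero, mul_zero, zero_add, sub_zero]
    have h := himp k n hkn
    have h1 : ((k:ℝ)+1)/((n:ℝ)+2) * R (k+1) (n+1) ≤
        ((k:ℝ)+1)/((n:ℝ)+2) * max (R (k+1) (n+1)) 0 :=
      mul_le_mul_of_nonneg_left (le_max_left _ _) hp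
    have h2 : ((n:ℝ)-(k:ℝ)+1)/((n:ℝ)+2) * R k (n+1) ≤
        ((n:ℝ)-(k:ℝ)+1)/((n:ℝ)+2) * max (R k (n+1)) 0 :=
      mul_le_mul_of_nonneg_left (le_max_left _ _) hq
    have h3 : (0:ℝ) ≤ ((k:ℝ)+1)/((n:ℝ)+2) * max (R (k+1) (n+1)) 0 :=
      mul_nonneg hp (le_max_right _ _)
    have h4 : (0:ℝ) ≤ ((n:ℝ)-(k:ℝ)+1)/((n:ℝ)+2) * max (R k (n+1)) 0 :=
      mul_nonneg hq (le_max_right _ _)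
    apply max_le <;> linarith
  | succ d ih =>
    intro j hj k n hkn
    have hjlt : j < T := by omega
    have hj1lt : j + 1 < T := by omega
    have hC := ih (j+1) (by omega)
    -- Monotonicity: the marginal value of an extra period is larger earlier
    have hM : ∀ a b : ℕ, a ≤ b →
        V a b (j+1) - V a b (j+1+1) ≤ V a b j - V a b (j+1) := by
      intro a b hab
      have hb0 := hb a b j hjlt
      have hb1 := hb a b (j+1) hj1lt
      have hCa := hC a b hab
      have lA0 : R a b + V a b (j+1) ≤ V a b j := by
        rw [hb0]; exact le_max_left _ _
      have lA1 : ((a:ℝ)+1)/((b:ℝ)+2) * V (a+1) (b+1) (j+1) +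
          ((b:ℝ)-(a:ℝ)+1)/((b:ℝ)+2) * V a (b+1) (j+1) ≤ V a b j := by
        rw [hb0]; exact le_max_right _ _
      rcases max_choice (R a b + V a b (j+1+1))
          (((a:ℝ)+1)/((b:ℝ)+2) * V (a+1) (b+1) (j+1+1) +
           ((b:ℝ)-(a:ℝ)+1)/((b:ℝ)+2) * V a (b+1) (j+1+1)) with hc | hc
      · rw [hc] at hb1
        linarith
      · rw [hc] at hb1
        have ms1 := mul_sub (((a:ℝ)+1)/((b:ℝ)+2))
          (V (a+1) (b+1) (j+1)) (V (a+1) (b+1) (j+1+1))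
        have ms2 := mul_sub (((b:ℝ)-(a:ℝ)+1)/((b:ℝ)+2))
          (V a (b+1) (j+1)) (V a (b+1) (j+1+1))
        linarith
    have hp : (0:ℝ) ≤ ((k:ℝ)+1)/((n:ℝ)+2) := by positivity
    have hq : (0:ℝ) ≤ ((n:ℝ)-(k:ℝ)+1)/((n:ℝ)+2) := by
      apply div_nonneg _ (by positivity)
      have : (k:ℝ) ≤ (n:ℝ) := by exact_mod_cast hkn
      linarith
    have hb0 := hb k n j hjlt
    have hb1 := hb k n (j+1) hj1lt
    have hCk := hC k n hkn
    have hM1 := mul_le_mul_of_nonneg_left (hM (k+1) (n+1) (by omega)) hp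
    have hM2 := mul_le_mul_of_nonneg_left (hM k (n+1) (by omega)) hq
    have lB0 : R k n + V k n (j+1+1) ≤ V k n (j+1) := by
      rw [hb1]; exact le_max_left _ _
    have lB1 : ((k:ℝ)+1)/((n:ℝ)+2) * V (k+1) (n+1) (j+1+1) +
        ((n:ℝ)-(k:ℝ)+1)/((n:ℝ)+2) * V k (n+1) (j+1+1) ≤ V k n (j+1) := by
      rw [hb1]; exact le_max_right _ _
    have ms1 := mul_sub (((k:ℝ)+1)/((n:ℝ)+2))
      (V (k+1) (n+1) (j+1)) (V (k+1) (n+1) (j+1+1))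
    have ms2 := mul_sub (((n:ℝ)-(k:ℝ)+1)/((n:ℝ)+2))
      (V k (n+1) (j+1)) (V k (n+1) (j+1+1))
    rcases max_choice (R k n + V k n (j+1))
        (((k:ℝ)+1)/((n:ℝ)+2) * V (k+1) (n+1) (j+1) +
         ((n:ℝ)-(k:ℝ)+1)/((n:ℝ)+2) * V k (n+1) (j+1)) with hc | hc
    · rw [hc] at hb0
      linarith
    · rw [hc] at hb0
      linarith

theorem stmt_13 (T : ℕ) (R : ℕ → ℕ → ℝ)
    (V : ℕ → ℕ → ℕ → ℝ)
    (hb : ∀ k n i : ℕ, i < T → V k n i =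
      max (R k n + V k n (i+1))
        (((k:ℝ)+1)/((n:ℝ)+2) * V (k+1) (n+1) (i+1) +
         ((n:ℝ)-(k:ℝ)+1)/((n:ℝ)+2) * V k (n+1) (i+1)))
    (ht : ∀ k n, V k n T = 0)
    (himp : ∀ k n : ℕ, k ≤ n →
      ((k:ℝ)+1)/((n:ℝ)+2) * R (k+1) (n+1) +
        ((n:ℝ)-(k:ℝ)+1)/((n:ℝ)+2) * R k (n+1) ≥ R k n)
    (k n i : ℕ) (hkn : k ≤ n) (hi : i + 1 < T)
    (hQ : R k n + V k n (i+1) ≥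
      ((k:ℝ)+1)/((n:ℝ)+2) * V (k+1) (n+1) (i+1) +
        ((n:ℝ)-(k:ℝ)+1)/((n:ℝ)+2) * V k (n+1) (i+1)) :
    R k n + V k n (i+2) ≥
      ((k:ℝ)+1)/((n:ℝ)+2) * V (k+1) (n+1) (i+2) +
        ((n:ℝ)-(k:ℝ)+1)/((n:ℝ)+2) * V k (n+1) (i+2) := by
  have hC := sensing_aux_D T R V hb ht himp (T - i - 2) (i+1) (by omega) k n hkn
  have e : i + 1 + 1 = i + 2 := by omega
  rw [e] at hC
  have ms1 := mul_sub (((k:ℝ)+1)/((n:ℝ)+2))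
    (V (k+1) (n+1) (i+1)) (V (k+1) (n+1) (i+2))
  have ms2 := mul_sub (((n:ℝ)-(k:ℝ)+1)/((n:ℝ)+2))
    (V k (n+1) (i+1)) (V k (n+1) (i+2))
  linarith
end

section
/- Let V be the optimal value function of the sensing MDP (Bellman recursion V(k,n,i) = max{R(k,n) + V(k,n,i+1), p·V(k+1,n+1,i+1) + (1-p)·V(k,n+1,i+1)}, p = (k+1)/(n+2), V(·,·,T) = 0, R ≥ 0). Define g(k,n,0) = R(k,n) and g(k,n,j) = p·g(k+1,n+1,j-1) + (1-p)·g(k,n+1,j-1). Then for every 0 ≤ j ≤ T - i, V(k,n,i) ≥ g(k,n,j)·(T - i - j). -/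
theorem stmt_14 (T : ℕ) (R : ℕ → ℕ → ℝ) (hR : ∀ k n, 0 ≤ R k n)
    (V : ℕ → ℕ → ℕ → ℝ)
    (hb : ∀ k n i : ℕ, i < T → V k n i =
      max (R k n + V k n (i+1))
        (((k:ℝ)+1)/((n:ℝ)+2) * V (k+1) (n+1) (i+1) +
         ((n:ℝ)-(k:ℝ)+1)/((n:ℝ)+2) * V k (n+1) (i+1)))
    (ht : ∀ k n, V k n T = 0)
    (g : ℕ → ℕ → ℕ → ℝ)
    (hg0 : ∀ k n, g k n 0 = R k n)
    (hgs : ∀ k n j, g k n (j+1) =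
      ((k:ℝ)+1)/((n:ℝ)+2) * g (k+1) (n+1) j +
      (1 - ((k:ℝ)+1)/((n:ℝ)+2)) * g k (n+1) j)
    (k n i j : ℕ) (hkn : k ≤ n) (hj : i + j ≤ T) :
    V k n i ≥ g k n j * ((T:ℝ) - (i:ℝ) - (j:ℝ)) := by
  have key : ∀ d k n i j, k ≤ n → i + j ≤ T → T - i ≤ d →
      V k n i ≥ g k n j * ((T:ℝ) - (i:ℝ) - (j:ℝ)) := by
    intro d
    induction d with
    | zero =>
      intro k n i j hkn hij hd
      have hiT : i = T := by omega
      have hj0 : j = 0 := by omega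
      rw [hj0, hiT, ht, hg0]
      norm_num
    | succ d ih =>
      intro k n i j hkn hij hd
      rcases Nat.lt_or_ge i T with hiT | hiT
      · cases j with
        | zero =>
          have h1 := ih k n (i+1) 0 hkn (by omega) (by omega)
          have hV : V k n i ≥ R k n + V k n (i+1) := by
            rw [hb k n i hiT]; exact le_max_left _ _
          rw [hg0] at h1 ⊢
          have hTc : (i:ℝ) + 1 ≤ (T:ℝ) := by exact_mod_cast hiT
          push_cast at h1 ⊢
          nlinarith [hR k n]
        | succ j' =>
          have h1 := ih (k+1) (n+1) (i+1) j' (by omega) (by omega) (by omega)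
          have h0 := ih k (n+1) (i+1) j' (by omega) (by omega) (by omega)
          have hV : V k n i ≥ ((k:ℝ)+1)/((n:ℝ)+2) * V (k+1) (n+1) (i+1) +
              ((n:ℝ)-(k:ℝ)+1)/((n:ℝ)+2) * V k (n+1) (i+1) := by
            rw [hb k n i hiT]; exact le_max_right _ _
          have hn2 : ((n:ℝ) + 2) ≠ 0 := by positivity
          have hp0 : (0:ℝ) ≤ ((k:ℝ)+1)/((n:ℝ)+2) := by positivity
          have hkn' : (k:ℝ) ≤ (n:ℝ) := Nat.cast_le.mpr hkn
          have hq0 : (0:ℝ) ≤ ((n:ℝ)-(k:ℝ)+1)/((n:ℝ)+2) := by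
            apply div_nonneg <;> linarith
          have hqe : ((n:ℝ)-(k:ℝ)+1)/((n:ℝ)+2) = 1 - ((k:ℝ)+1)/((n:ℝ)+2) := by
            field_simp; ring
          rw [hgs]
          have hm1 : ((k:ℝ)+1)/((n:ℝ)+2) * (g (k+1) (n+1) j' * ((T:ℝ) - ((i:ℝ)+1) - (j':ℝ)))
              ≤ ((k:ℝ)+1)/((n:ℝ)+2) * V (k+1) (n+1) (i+1) := by
            apply mul_le_mul_of_nonneg_left _ hp0
            have := h1; push_cast at this ⊢; linarith
          have hm0 : ((n:ℝ)-(k:ℝ)+1)/((n:ℝ)+2) * (g k (n+1) j' * ((T:ℝ) - ((i:ℝ)+1) - (j':ℝ)))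
              ≤ ((n:ℝ)-(k:ℝ)+1)/((n:ℝ)+2) * V k (n+1) (i+1) := by
            apply mul_le_mul_of_nonneg_left _ hq0
            have := h0; push_cast at this ⊢; linarith
          rw [hqe] at hm0
          have hcast : ((T:ℝ) - (i:ℝ) - ((j'+1:ℕ):ℝ)) = (T:ℝ) - ((i:ℝ)+1) - (j':ℝ) := by
            push_cast; ring
          rw [hcast]
          calc (((k:ℝ)+1)/((n:ℝ)+2) * g (k+1) (n+1) j' +
                (1 - ((k:ℝ)+1)/((n:ℝ)+2)) * g k (n+1) j') * ((T:ℝ) - ((i:ℝ)+1) - (j':ℝ))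
              = ((k:ℝ)+1)/((n:ℝ)+2) * (g (k+1) (n+1) j' * ((T:ℝ) - ((i:ℝ)+1) - (j':ℝ))) +
                (1 - ((k:ℝ)+1)/((n:ℝ)+2)) * (g k (n+1) j' * ((T:ℝ) - ((i:ℝ)+1) - (j':ℝ))) := by ring
            _ ≤ ((k:ℝ)+1)/((n:ℝ)+2) * V (k+1) (n+1) (i+1) +
                (1 - ((k:ℝ)+1)/((n:ℝ)+2)) * V k (n+1) (i+1) := add_le_add hm1 hm0
            _ ≤ V k n i := by rw [← hqe]; exact hV
      · have hiT' : i = T := by omega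
        have hj0 : j = 0 := by omega
        rw [hj0, hiT', ht, hg0]
        norm_num
  exact key (T - i) k n i j hkn hj le_rfl
end

section
/- Let P, N₁, N₂ > 0 with N₁ < N₂ and q̄ ∈ [0,1]. The function F(α) = q̄·(1/2)log₂(1 + αP/N₁) + (1/2)log₂(1 + (1-α)P/(αP + N₂)) attains its maximum over [0,1] at α* = min{max{0, (N₂·q̄ - N₁)/(P·(1-q̄))}, 1} when q̄ < 1, and at α* = 1 when q̄ = 1. -/
/-- Reduction: maximizing F is equivalent to maximizing
`g α = qb * log (α*P+N₁) - log (α*P+N₂)`. -/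
lemma helperF (P N₁ N₂ qb : ℝ) (hP : 0 < P) (hN₁ : 0 < N₁) (hN₂ : 0 < N₂)
    (a : ℝ) (ha : a ∈ Set.Icc (0:ℝ) 1)
    (hg : ∀ x ∈ Set.Icc (0:ℝ) 1,
      qb * Real.log (x * P + N₁) - Real.log (x * P + N₂) ≤
      qb * Real.log (a * P + N₁) - Real.log (a * P + N₂)) :
    IsMaxOn (fun α : ℝ =>
        qb * (((1:ℝ)/2) * Real.logb 2 (1 + α * P / N₁)) +
        ((1:ℝ)/2) * Real.logb 2 (1 + (1 - α) * P / (α * P + N₂)))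
      (Set.Icc (0:ℝ) 1) a := by
  have hl2 : (0:ℝ) < Real.log 2 := Real.log_pos one_lt_two
  have key : ∀ y : ℝ, 0 ≤ y →
      qb * (((1:ℝ)/2) * Real.logb 2 (1 + y * P / N₁)) +
        ((1:ℝ)/2) * Real.logb 2 (1 + (1 - y) * P / (y * P + N₂)) =
      (1 / (2 * Real.log 2)) * (Real.log (P + N₂) - qb * Real.log N₁) +
      (1 / (2 * Real.log 2)) * (qb * Real.log (y * P + N₁) - Real.log (y * P + N₂)) := by
    intro y hy
    have hA : 0 < y * P + N₁ := by nlinarith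
    have hB : 0 < y * P + N₂ := by nlinarith
    have hC : 0 < P + N₂ := by linarith
    have e1 : 1 + y * P / N₁ = (y * P + N₁) / N₁ := by field_simp; ring
    have e2 : 1 + (1 - y) * P / (y * P + N₂) = (P + N₂) / (y * P + N₂) := by
      field_simp; ring
    rw [e1, e2, Real.logb, Real.logb, Real.log_div hA.ne' hN₁.ne',
      Real.log_div hC.ne' hB.ne']
    field_simp
    ring
  intro x hx
  simp only [Set.mem_setOf_eq]
  rw [key x hx.1, key a ha.1]
  have h := hg x hx
  have hK : (0:ℝ) ≤ 1 / (2 * Real.log 2) := by positivity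
  nlinarith [mul_le_mul_of_nonneg_left h hK]

lemma gmono (P N₁ N₂ qb c d : ℝ) (hP : 0 < P) (hN₁ : 0 < N₁) (hN₂ : 0 < N₂)
    (h0 : 0 ≤ c)
    (hsign : ∀ α, c < α → α < d → α * P + N₁ < qb * (α * P + N₂)) :
    MonotoneOn (fun α : ℝ => qb * Real.log (α * P + N₁) - Real.log (α * P + N₂))
      (Set.Icc c d) := by
  have cont : ContinuousOn
      (fun α : ℝ => qb * Real.log (α * P + N₁) - Real.log (α * P + N₂))
      (Set.Icc c d) := by
    have c1 : ContinuousOn (fun α : ℝ => α * P + N₁) (Set.Icc c d) :=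
      (Continuous.continuousOn (by continuity))
    have c2 : ContinuousOn (fun α : ℝ => α * P + N₂) (Set.Icc c d) :=
      (Continuous.continuousOn (by continuity))
    exact (continuousOn_const.mul (c1.log (fun x hx => by nlinarith [hx.1]))).sub
      (c2.log (fun x hx => by nlinarith [hx.1]))
  refine (strictMonoOn_of_deriv_pos (convex_Icc c d) cont ?_).monotoneOn
  intro x hx
  rw [interior_Icc] at hx
  have hxc : c < x := hx.1
  have hx0 : 0 < x := lt_of_le_of_lt h0 hxc
  have hA : 0 < x * P + N₁ := by nlinarith
  have hB : 0 < x * P + N₂ := by nlinarith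
  have h1 : HasDerivAt (fun α : ℝ => α * P + N₁) P x := by
    simpa using ((hasDerivAt_id x).mul_const P).add_const N₁
  have h2 : HasDerivAt (fun α : ℝ => α * P + N₂) P x := by
    simpa using ((hasDerivAt_id x).mul_const P).add_const N₂
  have h3 := ((h1.log hA.ne').const_mul qb).sub (h2.log hB.ne')
  rw [show deriv (fun α : ℝ => qb * Real.log (α * P + N₁) - Real.log (α * P + N₂)) x = qb * (P / (x * P + N₁)) - P / (x * P + N₂) from h3.deriv]
  have hs := hsign x hx.1 hx.2
  rw [sub_pos, mul_div_assoc']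
  rw [div_lt_div_iff₀ hB hA]
  nlinarith

lemma ganti (P N₁ N₂ qb c d : ℝ) (hP : 0 < P) (hN₁ : 0 < N₁) (hN₂ : 0 < N₂)
    (h0 : 0 ≤ c)
    (hsign : ∀ α, c < α → α < d → qb * (α * P + N₂) < α * P + N₁) :
    AntitoneOn (fun α : ℝ => qb * Real.log (α * P + N₁) - Real.log (α * P + N₂))
      (Set.Icc c d) := by
  have cont : ContinuousOn
      (fun α : ℝ => qb * Real.log (α * P + N₁) - Real.log (α * P + N₂))
      (Set.Icc c d) := by
    have c1 : ContinuousOn (fun α : ℝ => α * P + N₁) (Set.Icc c d) :=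
      (Continuous.continuousOn (by continuity))
    have c2 : ContinuousOn (fun α : ℝ => α * P + N₂) (Set.Icc c d) :=
      (Continuous.continuousOn (by continuity))
    exact (continuousOn_const.mul (c1.log (fun x hx => by nlinarith [hx.1]))).sub
      (c2.log (fun x hx => by nlinarith [hx.1]))
  refine (strictAntiOn_of_deriv_neg (convex_Icc c d) cont ?_).antitoneOn
  intro x hx
  rw [interior_Icc] at hx
  have hxc : c < x := hx.1
  have hx0 : 0 < x := lt_of_le_of_lt h0 hxc
  have hA : 0 < x * P + N₁ := by nlinarith
  have hB : 0 < x * P + N₂ := by nlinarith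
  have h1 : HasDerivAt (fun α : ℝ => α * P + N₁) P x := by
    simpa using ((hasDerivAt_id x).mul_const P).add_const N₁
  have h2 : HasDerivAt (fun α : ℝ => α * P + N₂) P x := by
    simpa using ((hasDerivAt_id x).mul_const P).add_const N₂
  have h3 := ((h1.log hA.ne').const_mul qb).sub (h2.log hB.ne')
  rw [show deriv (fun α : ℝ => qb * Real.log (α * P + N₁) - Real.log (α * P + N₂)) x = qb * (P / (x * P + N₁)) - P / (x * P + N₂) from h3.deriv]
  have hs := hsign x hx.1 hx.2
  rw [sub_neg, mul_div_assoc']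
  rw [div_lt_div_iff₀ hA hB]
  nlinarith

theorem stmt_19 (P N₁ N₂ qb : ℝ) (hP : 0 < P) (hN₁ : 0 < N₁) (hN₂ : 0 < N₂)
    (hN : N₁ < N₂) (hq : qb ∈ Set.Icc (0:ℝ) 1) :
    (qb < 1 → IsMaxOn (fun α : ℝ =>
        qb * (((1:ℝ)/2) * Real.logb 2 (1 + α * P / N₁)) +
        ((1:ℝ)/2) * Real.logb 2 (1 + (1 - α) * P / (α * P + N₂)))
      (Set.Icc (0:ℝ) 1)
      (min (max 0 ((N₂ * qb - N₁) / (P * (1 - qb)))) 1)) ∧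
    (qb = 1 → IsMaxOn (fun α : ℝ =>
        qb * (((1:ℝ)/2) * Real.logb 2 (1 + α * P / N₁)) +
        ((1:ℝ)/2) * Real.logb 2 (1 + (1 - α) * P / (α * P + N₂)))
      (Set.Icc (0:ℝ) 1) 1) := by
  obtain ⟨hq0, hq1⟩ := hq
  constructor
  · intro hqlt
    set t : ℝ := (N₂ * qb - N₁) / (P * (1 - qb)) with ht_def
    have hPq : 0 < P * (1 - qb) := mul_pos hP (by linarith)
    have ht : t * (P * (1 - qb)) = N₂ * qb - N₁ := div_mul_cancel₀ _ hPq.ne'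
    set a : ℝ := min (max 0 t) 1 with ha_def
    have ha : a ∈ Set.Icc (0:ℝ) 1 :=
      ⟨le_min (le_max_left 0 t) zero_le_one, min_le_right _ _⟩
    apply helperF P N₁ N₂ qb hP hN₁ hN₂ a ha
    intro x hx
    rcases le_or_gt t 0 with htle | htpos
    · -- a = 0, antitone on [0,1]
      have ha0 : a = 0 := by
        rw [ha_def, max_eq_left htle, min_eq_left zero_le_one]
      have hanti := ganti P N₁ N₂ qb 0 1 hP hN₁ hN₂ le_rfl (by
        intro α h1 h2
        nlinarith [mul_lt_mul_of_pos_right h1 hPq])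
      have := hanti (Set.left_mem_Icc.2 zero_le_one) hx hx.1
      rw [ha0]
      simpa using this
    · rcases le_or_gt 1 t with htge | htlt
      · -- a = 1, monotone on [0,1]
        have ha1 : a = 1 := by
          rw [ha_def, max_eq_right htpos.le, min_eq_right htge]
        have hmono := gmono P N₁ N₂ qb 0 1 hP hN₁ hN₂ le_rfl (by
          intro α h1 h2
          have : α < t := lt_of_lt_of_le h2 htge
          nlinarith [mul_lt_mul_of_pos_right this hPq])
        have := hmono hx (Set.right_mem_Icc.2 zero_le_one) hx.2
        rw [ha1]
        simpa using this
      · -- a = t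
        have hat : a = t := by
          rw [ha_def, max_eq_right htpos.le, min_eq_left htlt.le]
        rw [hat]
        have hmono := gmono P N₁ N₂ qb 0 t hP hN₁ hN₂ le_rfl (by
          intro α h1 h2
          nlinarith [mul_lt_mul_of_pos_right h2 hPq])
        have hanti := ganti P N₁ N₂ qb t 1 hP hN₁ hN₂ htpos.le (by
          intro α h1 h2
          nlinarith [mul_lt_mul_of_pos_right h1 hPq])
        rcases le_total x t with hxt | htx
        · have := hmono ⟨hx.1, hxt⟩ (Set.right_mem_Icc.2 htpos.le) hxt
          simpa using this
        · have := hanti (Set.left_mem_Icc.2 htlt.le) ⟨htx, hx.2⟩ htx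
          simpa using this
  · intro hqe
    subst hqe
    apply helperF P N₁ N₂ 1 hP hN₁ hN₂ 1 (Set.right_mem_Icc.2 zero_le_one)
    intro x hx
    have hmono := gmono P N₁ N₂ 1 0 1 hP hN₁ hN₂ le_rfl (by
      intro α h1 h2; nlinarith)
    have := hmono hx (Set.right_mem_Icc.2 zero_le_one) hx.2
    simpa using this
end
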